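/- arXiv:2508.01964 — 3 statements merged into one kernel-verified Lean document; each statement's English description precedes it below -/
import Mathlib

section
/- Let K be a positive semidefinite bounded linear operator on H and let (F,G) be an (N,n) K-dual pair such that ‖f_i‖·‖g_i‖ = tr(K)/N for every i ∈ {1,…,N}. Then ⟨f_i, g_i⟩ = tr(K)/N for every i ∈ {1,…,N} (in particular each ⟨f_i, g_i⟩ is a nonnegative real number). -/
/-!
The dual-pair identity writes `K` as the sum of the rank-one maps `f ↦ ⟨f, g_i⟩ f_i`, so
`tr K = ∑ i, ⟨f_i, g_i⟩`. By Cauchy–Schwarz each `|⟨f_i, g_i⟩|` is at most `Re (tr K) / N`,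
the mean of the real parts `Re ⟨f_i, g_i⟩`; hence every real part equals that mean and also
equals the modulus, which forces every `⟨f_i, g_i⟩` to be that same real number.
-/

open scoped ComplexOrder

local notation "⟪" x ", " y "⟫" => @inner ℂ _ _ x y

theorem LinearMap.trace_eq_sum_inner_of_apply_eq_sum {𝕜 E ι : Type*} [RCLike 𝕜]
    [NormedAddCommGroup E] [InnerProductSpace 𝕜 E] [FiniteDimensional 𝕜 E] [Fintype ι]
    (T : E →ₗ[𝕜] E) (f g : ι → E) (hT : ∀ x, T x = ∑ i, inner 𝕜 (g i) x • f i) :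
    LinearMap.trace 𝕜 E T = ∑ i, inner 𝕜 (g i) (f i) := by
  have hT_sum : T = ∑ i, (innerₛₗ 𝕜 (g i)).smulRight (f i) := by
    ext x
    simp [hT]
  simp [hT_sum, map_sum, LinearMap.trace_smulRight]

theorem RCLike.eq_sum_div_card_of_forall_norm_le {𝕜 ι : Type*} [RCLike 𝕜] [Fintype ι]
    (z : ι → 𝕜) (hz : ∀ i, ‖z i‖ ≤ RCLike.re (∑ j, z j) / Fintype.card ι) (i : ι) :
    z i = (∑ j, z j) / Fintype.card ι := by
  have : Nonempty ι := ⟨i⟩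
  have hcard : (Fintype.card ι : ℝ) ≠ 0 := Nat.cast_ne_zero.mpr Fintype.card_ne_zero
  set m := RCLike.re (∑ j, z j) / Fintype.card ι
  have hre_sum : ∑ j, RCLike.re (z j) = ∑ _j : ι, m := by
    simp [m, ← map_sum, mul_div_cancel₀ _ hcard]
  have hre : ∀ j, RCLike.re (z j) = m := fun j =>
    (Finset.sum_eq_sum_iff_of_le fun j _ => (RCLike.re_le_norm _).trans (hz j)).mp
      hre_sum j (Finset.mem_univ j)
  have hzm : ∀ j, z j = m := fun j => by
    have hnorm : ‖z j‖ = m := le_antisymm (hz j) ((hre j).symm.trans_le (RCLike.re_le_norm _))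
    rw [RCLike.norm_le_re_iff_eq_norm.mp (hnorm.le.trans_eq (hre j).symm), hnorm]
  have hcard' : (Fintype.card ι : 𝕜) ≠ 0 := by exact_mod_cast hcard
  simp [hzm, hcard']

/-- The paper's `⟨f, g⟩` is linear in the first slot, so `⟨f_i, g_i⟩` is Mathlib's `⟪g_i, f_i⟫`. -/
theorem stmt3_general
    {H : Type*} [NormedAddCommGroup H] [InnerProductSpace ℂ H] [FiniteDimensional ℂ H]
    {N : ℕ}
    (K : H →L[ℂ] H)
    (F G : Fin N → H)
    (hdual : ∀ f : H, K f = ∑ i, ⟪G i, f⟫ • F i)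
    (hnorm : ∀ i, ‖F i‖ * ‖G i‖ = (LinearMap.trace ℂ H (K : H →ₗ[ℂ] H)).re / N) :
    ∀ i, ⟪G i, F i⟫ = LinearMap.trace ℂ H (K : H →ₗ[ℂ] H) / N := by
  have htrace := LinearMap.trace_eq_sum_inner_of_apply_eq_sum (K : H →ₗ[ℂ] H) F G hdual
  have hmean := RCLike.eq_sum_div_card_of_forall_norm_le (fun i => ⟪G i, F i⟫) fun i => by
    rw [← htrace, Fintype.card_fin, RCLike.re_to_complex, ← hnorm i, mul_comm]
    exact norm_inner_le_norm _ _
  simpa [htrace] using hmean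

/-- If `K` is positive semidefinite and `(F, G)` is an `(N, n)` `K`-dual pair
with `‖f_i‖·‖g_i‖ = tr(K)/N` for every `i`, then `⟨f_i, g_i⟩ = tr(K)/N` for every `i`.
(The paper's `⟨f, g⟩` is linear in the first slot, so `⟨f_i, g_i⟩` is Mathlib's `⟪g_i, f_i⟫`.) -/
theorem stmt3
    {H : Type*} [NormedAddCommGroup H] [InnerProductSpace ℂ H] [FiniteDimensional ℂ H]
    (hdim : 1 ≤ Module.finrank ℂ H)
    {N : ℕ} (hN : 1 ≤ N)
    (K : H →L[ℂ] H) (hK : ∀ f : H, 0 ≤ ⟪K f, f⟫)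
    (F G : Fin N → H)
    (hdual : ∀ f : H, K f = ∑ i, ⟪G i, f⟫ • F i)
    (hnorm : ∀ i, ‖F i‖ * ‖G i‖ = (LinearMap.trace ℂ H (K : H →ₗ[ℂ] H)).re / N) :
    ∀ i, ⟪G i, F i⟫ = LinearMap.trace ℂ H (K : H →ₗ[ℂ] H) / N :=
  stmt3_general K F G hdual hnorm
end

section
/- Let K be a bounded linear operator on H with Moore–Penrose pseudoinverse P, and let F = (f_1,…,f_N) be a Parseval K-frame for H with N > n = dim H. Set L = max_{1≤i≤N} ‖f_i‖·‖P f_i‖, Λ₁ = { i : ‖f_i‖·‖P f_i‖ = L }, Λ₂ = {1,…,N} \ Λ₁, V₁ = span{ f_i : i ∈ Λ₁ } and V₂ = span{ f_i : i ∈ Λ₂ }. If V₁ ∩ V₂ = {0} and the family { f_i : i ∈ Λ₁ } is linearly independent, then the set of K-duals G = (g_1,…,g_N) of F satisfying max_{1≤i≤N} ‖f_i‖·‖g_i‖ = L is uncountable, and L is the minimum of max_{1≤i≤N} ‖f_i‖·‖g_i‖ over all K-duals G of F. -/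
local notation "⟪" x ", " y "⟫" => @inner ℂ _ _ x y

/-!
Two K-duals of `F` differ by a family `D` with `∑ ⟪D i, f⟫ • F i = 0` for every `f`. Since
`V₁ ∩ V₂ = 0` and `{F i | i ∈ Λ₁}` is independent, no linear relation among the `F i` involves an
index of `Λ₁`; hence every K-dual agrees with the canonical dual `P ∘ F` on `Λ₁`, which forces
`max_i ‖F i‖ * ‖G i‖ ≥ L`. Conversely `N > dim H` yields a nontrivial relation `∑ c i • F i = 0`,
supported in `Λ₂`. Adding `t • (conj (c i) • u)`, `u ≠ 0`, to the canonical dual keeps it a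
K-dual, and for `t` near `0` the products on `Λ₂` stay below `L`, so a whole disc of parameters
gives optimal duals.
-/

open ContinuousLinearMap Filter Topology

section KDual

variable {H : Type*} [NormedAddCommGroup H] [InnerProductSpace ℂ H] {ι : Type*} [Fintype ι]

def IsKDual (K : H →L[ℂ] H) (F G : ι → H) : Prop :=
  ∀ f, K f = ∑ i, ⟪G i, f⟫ • F i

theorem sum_inner_smul_eq_apply_adjoint [CompleteSpace H] {K : H →L[ℂ] H} {F : ι → H}
    (hF : ∀ f, ∑ i, ‖⟪F i, f⟫‖ ^ 2 = ‖adjoint K f‖ ^ 2) (f : H) :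
    ∑ i, ⟪F i, f⟫ • F i = K (adjoint K f) := by
  have key : (∑ i, ((innerSL ℂ (F i)).smulRight (F i) : H →ₗ[ℂ] H)) =
      ((K ∘L adjoint K : H →L[ℂ] H) : H →ₗ[ℂ] H) := by
    refine (ext_inner_map _ _).mp fun x => ?_
    have hx := congrArg (fun r : ℝ => (r : ℂ)) (hF x)
    push_cast at hx
    simp only [LinearMap.sum_apply, coe_coe, smulRight_apply, innerSL_apply_apply, sum_inner,
      inner_smul_left, Complex.conj_mul', comp_apply, ← adjoint_inner_right,
      inner_self_eq_norm_sq_to_K]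
    exact hx
  simpa using LinearMap.congr_fun key f

theorem isKDual_of_parseval [CompleteSpace H] {K P : H →L[ℂ] H} {F : ι → H}
    (hF : ∀ f, ∑ i, ‖⟪F i, f⟫‖ ^ 2 = ‖adjoint K f‖ ^ 2)
    (hKPK : K ∘L P ∘L K = K) (hPK : IsSelfAdjoint (P ∘L K)) :
    IsKDual K F (fun i => P (F i)) := by
  intro f
  calc K f = K (P (K f)) := by simpa using (congrArg (· f) hKPK).symm
    _ = K (adjoint K (adjoint P f)) := by
        rw [← comp_apply (adjoint K), ← adjoint_comp, hPK.adjoint_eq, comp_apply]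
    _ = ∑ i, ⟪P (F i), f⟫ • F i := by
        simp only [← sum_inner_smul_eq_apply_adjoint hF, adjoint_inner_right]

theorem coeff_eq_zero_of_sum_smul_eq_zero {F : ι → H} {s : Set ι}
    (hV : Submodule.span ℂ (F '' s) ⊓ Submodule.span ℂ (F '' sᶜ) = ⊥)
    (hind : LinearIndependent ℂ (fun i : s => F i)) {c : ι → ℂ}
    (hc : ∑ i, c i • F i = 0) {i : ι} (hi : i ∈ s) : c i = 0 := by
  classical
  set x := ∑ j : s, c j • F j
  have hx : x = -∑ j : ↥sᶜ, c j • F j := by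
    rw [eq_neg_iff_add_eq_zero, ← hc]
    exact Fintype.sum_subtype_add_sum_subtype (· ∈ s) fun j => c j • F j
  have hx_mem : x ∈ Submodule.span ℂ (F '' s) ⊓ Submodule.span ℂ (F '' sᶜ) := by
    refine ⟨Submodule.sum_mem _ fun j _ => ?_,
      hx ▸ Submodule.neg_mem _ (Submodule.sum_mem _ fun j _ => ?_)⟩
    · exact Submodule.smul_mem _ _ (Submodule.subset_span (Set.mem_image_of_mem F j.2))
    · exact Submodule.smul_mem _ _ (Submodule.subset_span (Set.mem_image_of_mem F j.2))
  rw [hV, Submodule.mem_bot] at hx_mem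
  exact Fintype.linearIndependent_iff.mp hind (fun j => c j) hx_mem ⟨i, hi⟩

theorem IsKDual.apply_eq {K : H →L[ℂ] H} {F G G' : ι → H} (hG : IsKDual K F G)
    (hG' : IsKDual K F G') {i : ι} (hi : ∀ c : ι → ℂ, ∑ j, c j • F j = 0 → c i = 0) :
    G i = G' i := by
  have hdiff : ∀ f, ∑ j, ⟪G j - G' j, f⟫ • F j = 0 := fun f => by
    simp only [inner_sub_left, sub_smul, Finset.sum_sub_distrib, ← hG f, ← hG' f, sub_self]
  exact sub_eq_zero.mp (inner_self_eq_zero.mp (hi _ (hdiff (G i - G' i))))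

theorem IsKDual.add_smul {K : H →L[ℂ] H} {F G v : ι → H} (hG : IsKDual K F G)
    (hv : ∀ f, ∑ i, ⟪v i, f⟫ • F i = 0) (t : ℂ) : IsKDual K F (G + t • v) := by
  intro f
  simp only [Pi.add_apply, Pi.smul_apply, inner_add_left, inner_smul_left, _root_.add_smul,
    mul_smul, Finset.sum_add_distrib, ← Finset.smul_sum, hv, smul_zero, add_zero, hG f]

theorem sum_inner_conj_smul_eq_zero {F : ι → H} {c : ι → ℂ} (hc : ∑ i, c i • F i = 0)
    (u f : H) :
    ∑ i, ⟪(starRingEnd ℂ (c i)) • u, f⟫ • F i = 0 := by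
  simp only [inner_smul_left, Complex.conj_conj, mul_comm (c _), mul_smul, ← Finset.smul_sum, hc,
    smul_zero]

theorem not_countable_setOf_isKDual_norm_mul_norm_le {K : H →L[ℂ] H} {F G₀ v : ι → H} {L : ℝ}
    (hG₀ : IsKDual K F G₀) (hv : ∀ f, ∑ i, ⟪v i, f⟫ • F i = 0) (hv₀ : v ≠ 0)
    (hle : ∀ i, ‖F i‖ * ‖G₀ i‖ ≤ L) (hlt : ∀ i, v i ≠ 0 → ‖F i‖ * ‖G₀ i‖ < L) :
    ¬ {G | IsKDual K F G ∧ ∀ i, ‖F i‖ * ‖G i‖ ≤ L}.Countable := by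
  set S := {G | IsKDual K F G ∧ ∀ i, ‖F i‖ * ‖G i‖ ≤ L}
  intro hcount
  have hnorm : ∀ i, ∀ᶠ t : ℂ in 𝓝 0, ‖F i‖ * ‖G₀ i + t • v i‖ ≤ L := by
    intro i
    by_cases hvi : v i = 0
    · simp [hvi, hle i]
    · have hcont : Continuous fun t : ℂ => ‖F i‖ * ‖G₀ i + t • v i‖ := by fun_prop
      have hlt₀ : ‖F i‖ * ‖G₀ i + (0 : ℂ) • v i‖ < L := by simpa using hlt i hvi
      exact ((hcont.tendsto 0).eventually (gt_mem_nhds hlt₀)).mono fun _ => le_of_lt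
  have hline : (fun t : ℂ => G₀ + t • v) ⁻¹' S ∈ 𝓝 0 := by
    filter_upwards [eventually_all.mpr hnorm] with t ht using ⟨hG₀.add_smul hv t, ht⟩
  have hline_countable :=
    hcount.preimage ((add_right_injective G₀).comp (smul_left_injective ℂ hv₀))
  obtain ⟨t, ht_compl, ht⟩ := (hline_countable.dense_compl ℂ).inter_nhds_nonempty hline
  exact ht_compl ht

end KDual

theorem stmt12_general
    {H : Type*} [NormedAddCommGroup H] [InnerProductSpace ℂ H] [FiniteDimensional ℂ H]
    {N : ℕ} (hN : Module.finrank ℂ H < N)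
    (K P : H →L[ℂ] H)
    (hP1 : K ∘L P ∘L K = K)
    (hP4 : IsSelfAdjoint (P ∘L K))
    (F : Fin N → H)
    (hParseval : ∀ f : H,
      ∑ i, ‖⟪F i, f⟫‖ ^ 2 = ‖ContinuousLinearMap.adjoint K f‖ ^ 2)
    (L : ℝ) (hL : L = ⨆ i, ‖F i‖ * ‖P (F i)‖)
    (hV : Submodule.span ℂ (F '' {i | ‖F i‖ * ‖P (F i)‖ = L}) ⊓
          Submodule.span ℂ (F '' {i | ‖F i‖ * ‖P (F i)‖ ≠ L}) = ⊥)
    (hind : LinearIndependent ℂ (fun i : {i : Fin N // ‖F i‖ * ‖P (F i)‖ = L} => F i.1)) :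
    ¬ Set.Countable {G : Fin N → H |
        (∀ f : H, K f = ∑ i, ⟪G i, f⟫ • F i) ∧ (⨆ i, ‖F i‖ * ‖G i‖) = L} ∧
    (∀ G : Fin N → H, (∀ f : H, K f = ∑ i, ⟪G i, f⟫ • F i) →
        L ≤ ⨆ i, ‖F i‖ * ‖G i‖) := by
  have hcanon : IsKDual K F (fun i => P (F i)) := isKDual_of_parseval hParseval hP1 hP4
  have hdet : ∀ i, ‖F i‖ * ‖P (F i)‖ = L → ∀ c : Fin N → ℂ, ∑ j, c j • F j = 0 → c i = 0 :=
    fun i hi c hc => coeff_eq_zero_of_sum_smul_eq_zero hV hind hc hi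
  have hle : ∀ i, ‖F i‖ * ‖P (F i)‖ ≤ L := fun i =>
    hL ▸ le_ciSup (Finite.bddAbove_range fun i => ‖F i‖ * ‖P (F i)‖) i
  have : Nonempty (Fin N) := ⟨⟨0, by omega⟩⟩
  obtain ⟨j, hj⟩ := exists_eq_ciSup_of_finite (f := fun i => ‖F i‖ * ‖P (F i)‖)
  rw [← hL] at hj
  have hmin : ∀ G, IsKDual K F G → L ≤ ⨆ i, ‖F i‖ * ‖G i‖ := fun G hG =>
    calc L = ‖F j‖ * ‖G j‖ := by rw [hG.apply_eq hcanon (hdet j hj), hj]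
      _ ≤ ⨆ i, ‖F i‖ * ‖G i‖ := le_ciSup (Finite.bddAbove_range fun i => ‖F i‖ * ‖G i‖) j
  refine ⟨fun hcount => ?_, hmin⟩
  obtain ⟨c, hc, i₀, hc₀⟩ := Fintype.not_linearIndependent_iff.mp fun hF =>
    ((Fintype.card_fin N ▸ hF.fintype_card_le_finrank).trans_lt hN).false
  have hFj : F j ≠ 0 := hind.ne_zero ⟨j, hj⟩
  have hv₀ : (fun i => starRingEnd ℂ (c i) • F j) ≠ 0 := fun hv =>
    hc₀ (by simpa [hFj] using congrFun hv i₀)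
  have hlt : ∀ i, starRingEnd ℂ (c i) • F j ≠ 0 → ‖F i‖ * ‖P (F i)‖ < L := fun i hvi =>
    (hle i).lt_of_ne fun hi => hvi (by simp [hdet i hi c hc])
  refine not_countable_setOf_isKDual_norm_mul_norm_le hcanon
    (sum_inner_conj_smul_eq_zero hc (F j)) hv₀ hle hlt (hcount.mono fun G hG => ?_)
  exact ⟨hG.1, le_antisymm (ciSup_le hG.2) (hmin G hG.1)⟩

/-- Let `K` be a bounded operator on `H` with Moore–Penrose pseudoinverse `P`
and `F` a Parseval `K`-frame with `N > n = dim H`.  With `L`, `Λ₁`, `Λ₂`, `V₁`, `V₂` as in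
Statement 11: if `V₁ ∩ V₂ = {0}` and `{f_i : i ∈ Λ₁}` is linearly independent, then the set
of `K`-duals `G` of `F` with `max_i ‖f_i‖·‖g_i‖ = L` is uncountable, and `L` is the minimum
of `max_i ‖f_i‖·‖g_i‖ over all `K`-duals `G` of `F`. -/
theorem stmt12
    {H : Type*} [NormedAddCommGroup H] [InnerProductSpace ℂ H] [FiniteDimensional ℂ H]
    (hdim : 1 ≤ Module.finrank ℂ H)
    {N : ℕ} (hN : Module.finrank ℂ H < N)
    (K P : H →L[ℂ] H)
    (hP1 : K ∘L P ∘L K = K) (hP2 : P ∘L K ∘L P = P)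
    (hP3 : IsSelfAdjoint (K ∘L P)) (hP4 : IsSelfAdjoint (P ∘L K))
    (F : Fin N → H)
    (hParseval : ∀ f : H,
      ∑ i, ‖⟪F i, f⟫‖ ^ 2 = ‖ContinuousLinearMap.adjoint K f‖ ^ 2)
    (L : ℝ) (hL : L = ⨆ i, ‖F i‖ * ‖P (F i)‖)
    (hV : Submodule.span ℂ (F '' {i | ‖F i‖ * ‖P (F i)‖ = L}) ⊓
          Submodule.span ℂ (F '' {i | ‖F i‖ * ‖P (F i)‖ ≠ L}) = ⊥)
    (hind : LinearIndependent ℂ (fun i : {i : Fin N // ‖F i‖ * ‖P (F i)‖ = L} => F i.1)) :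
    ¬ Set.Countable {G : Fin N → H |
        (∀ f : H, K f = ∑ i, ⟪G i, f⟫ • F i) ∧ (⨆ i, ‖F i‖ * ‖G i‖) = L} ∧
    (∀ G : Fin N → H, (∀ f : H, K f = ∑ i, ⟪G i, f⟫ • F i) →
        L ≤ ⨆ i, ‖F i‖ * ‖G i‖) :=
  stmt12_general hN K P hP1 hP4 F hParseval L hL hV hind
end

section
/- Let N ≥ 2, let G = (g_1,…,g_N) be a K-dual of F = (f_1,…,f_N), and suppose: (i) each ⟨g_i, f_i⟩ is a nonnegative real number, and (ii) there is a real constant c < 0 with ⟨g_i, f_j⟩⟨g_j, f_i⟩ = c for all i ≠ j. Set r₁ = max_{1≤i≤N} ⟨g_i, f_i⟩, Δ = { i : ⟨g_i, f_i⟩ = r₁ }, and r₂ = max_{i≠j} ρ(T_{ij}), where T_{ij} f = ⟨f, g_i⟩ f_i + ⟨f, g_j⟩ f_j and ρ denotes the spectral radius. If Δ contains more than one element, then r₂ = √( r₁² − c ). -/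
/-!
Pairing the eigenvalue equation `T_{ij} v = μ v` with `g_i` and `g_j` shows that every nonzero
eigenvalue of `T_{ij}` is a root of `(μ - ⟨g_i, f_i⟩)(μ - ⟨g_j, f_j⟩) = ⟨g_i, f_j⟩⟨g_j, f_i⟩ = c`,
and conversely. With real diagonal entries in `[0, r₁]` and `c < 0`, such a root satisfies
`|μ|² ≤ r₁² - c`; when both diagonal entries equal `r₁`, the root `r₁ + i√(-c)` attains the bound.
-/

local notation "⟪" x ", " y "⟫" => @inner ℂ _ _ x y

/-- The spectral radius of an operator `T` on a finite-dimensional complex inner product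
space: the maximum of `|λ|` over the spectrum of `T` over `ℂ`. -/
noncomputable def specRad {H : Type*} [NormedAddCommGroup H] [InnerProductSpace ℂ H]
    (T : H →L[ℂ] H) : ℝ :=
  ⨆ lam ∈ spectrum ℂ T, ‖lam‖

/-- The two-erasure error operator `T_{ij} f = ⟨f, g_i⟩ f_i + ⟨f, g_j⟩ f_j`
(the paper's `⟨f, g⟩` is linear in the first slot, i.e. Mathlib's `⟪g, f⟫`). -/
noncomputable def erasureOp {H : Type*} [NormedAddCommGroup H] [InnerProductSpace ℂ H]
    (fi fj gi gj : H) : H →L[ℂ] H :=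
  (innerSL ℂ gi).smulRight fi + (innerSL ℂ gj).smulRight fj

theorem Complex.norm_le_sqrt_of_mul_sub_eq {μ : ℂ} {a d r c : ℝ} (ha0 : 0 ≤ a) (har : a ≤ r)
    (hd0 : 0 ≤ d) (hdr : d ≤ r) (hc : c ≤ 0) (h : (μ - a) * (μ - d) = c) :
    ‖μ‖ ≤ √(r ^ 2 - c) := by
  obtain ⟨u, v, rfl⟩ : ∃ u v : ℝ, μ = u + v * Complex.I := ⟨_, _, (Complex.re_add_im μ).symm⟩
  have hre : (u - a) * (u - d) - v * v = c := by simpa using congrArg Complex.re h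
  have him : (u - a) * v + v * (u - d) = 0 := by simpa using congrArg Complex.im h
  rw [Complex.norm_add_mul_I]
  apply Real.sqrt_le_sqrt
  rcases eq_or_ne v 0 with hv | hv
  · -- a real root of a quadratic with value `c ≤ 0` lies between `a` and `d`
    rw [hv] at hre ⊢
    have hu0 : 0 ≤ u := by nlinarith
    have hur : u ≤ r := by nlinarith
    nlinarith
  · -- a non-real root has real part `(a + d) / 2`, and then `u² + v² = a d - c`
    have hu : u = (a + d) / 2 := by
      have : (2 * u - (a + d)) * v = 0 := by linear_combination him
      linarith [(mul_eq_zero.mp this).resolve_right hv]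
    rw [hu] at hre ⊢
    nlinarith [mul_le_mul har hdr hd0 (ha0.trans har)]

theorem ContinuousLinearMap.mem_spectrum_iff_exists_eigenvector {𝕜 E : Type*} [RCLike 𝕜]
    [NormedAddCommGroup E] [NormedSpace 𝕜 E] [FiniteDimensional 𝕜 E] {T : E →L[𝕜] E} {μ : 𝕜} :
    μ ∈ spectrum 𝕜 T ↔ ∃ v, v ≠ 0 ∧ T v = μ • v := by
  have := FiniteDimensional.complete 𝕜 E
  rw [ContinuousLinearMap.spectrum_eq, ← Module.End.hasEigenvalue_iff_mem_spectrum]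
  constructor
  · intro h
    obtain ⟨v, hv⟩ := h.exists_hasEigenvector
    exact ⟨v, hv.2, Module.End.mem_eigenspace_iff.mp hv.1⟩
  · rintro ⟨v, hv, hTv⟩
    exact Module.End.hasEigenvalue_of_hasEigenvector ⟨Module.End.mem_eigenspace_iff.mpr hTv, hv⟩

section SpectralRadius

variable {H : Type*} [NormedAddCommGroup H] [InnerProductSpace ℂ H]

theorem specRad_le {T : H →L[ℂ] H} {B : ℝ} (hB : 0 ≤ B) (h : ∀ μ ∈ spectrum ℂ T, ‖μ‖ ≤ B) :
    specRad T ≤ B :=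
  Real.iSup_le (fun μ => Real.iSup_le (h μ) hB) hB

theorem norm_le_specRad [CompleteSpace H] {T : H →L[ℂ] H} {μ : ℂ} (hμ : μ ∈ spectrum ℂ T) :
    ‖μ‖ ≤ specRad T := by
  have hbdd : BddAbove (Set.range fun μ : ℂ => ⨆ _ : μ ∈ spectrum ℂ T, ‖μ‖) := by
    refine ⟨‖T‖ * ‖(1 : H →L[ℂ] H)‖, ?_⟩
    rintro _ ⟨ν, rfl⟩
    exact Real.iSup_le (fun hν => spectrum.norm_le_norm_mul_of_mem hν) (by positivity)
  exact le_ciSup_of_le hbdd μ (by rw [ciSup_pos hμ])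

end SpectralRadius

section ErasureOperator

variable {H : Type*} [NormedAddCommGroup H] [InnerProductSpace ℂ H] {fi fj gi gj : H}

@[simp]
theorem erasureOp_apply (v : H) : erasureOp fi fj gi gj v = ⟪gi, v⟫ • fi + ⟪gj, v⟫ • fj := by
  simp [erasureOp]

theorem eq_zero_or_of_erasureOp_apply_eq_smul {μ : ℂ} {v : H} (hv : v ≠ 0)
    (hTv : erasureOp fi fj gi gj v = μ • v) :
    μ = 0 ∨ (μ - ⟪gi, fi⟫) * (μ - ⟪gj, fj⟫) = ⟪gi, fj⟫ * ⟪gj, fi⟫ := by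
  rw [erasureOp_apply] at hTv
  have hx : (μ - ⟪gi, fi⟫) * ⟪gi, v⟫ = ⟪gi, fj⟫ * ⟪gj, v⟫ := by
    have := congrArg (fun w => ⟪gi, w⟫) hTv
    simp only [inner_add_right, inner_smul_right] at this
    linear_combination -this
  have hy : (μ - ⟪gj, fj⟫) * ⟪gj, v⟫ = ⟪gj, fi⟫ * ⟪gi, v⟫ := by
    have := congrArg (fun w => ⟪gj, w⟫) hTv
    simp only [inner_add_right, inner_smul_right] at this
    linear_combination -this
  by_cases hxy : ⟪gi, v⟫ = 0 ∧ ⟪gj, v⟫ = 0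
  · left
    have : μ • v = 0 := by rw [← hTv, hxy.1, hxy.2, zero_smul, zero_smul, add_zero]
    exact (smul_eq_zero.mp this).resolve_right hv
  · right
    rcases not_and_or.mp hxy with hx0 | hy0
    · apply mul_right_cancel₀ hx0
      linear_combination (μ - ⟪gj, fj⟫) * hx + ⟪gi, fj⟫ * hy
    · apply mul_right_cancel₀ hy0
      linear_combination (μ - ⟪gi, fi⟫) * hy + ⟪gj, fi⟫ * hx

theorem erasureOp_apply_eigenvector {μ : ℂ}
    (hμ : (μ - ⟪gi, fi⟫) * (μ - ⟪gj, fj⟫) = ⟪gi, fj⟫ * ⟪gj, fi⟫) :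
    erasureOp fi fj gi gj (⟪gi, fj⟫ • fi + (μ - ⟪gi, fi⟫) • fj) =
      μ • (⟪gi, fj⟫ • fi + (μ - ⟪gi, fi⟫) • fj) := by
  simp only [erasureOp_apply, inner_add_right, inner_smul_right, smul_add, smul_smul]
  congr 2
  · ring
  · linear_combination -hμ

end ErasureOperator

section ErasureSpectrum

variable {H : Type*} [NormedAddCommGroup H] [InnerProductSpace ℂ H] [FiniteDimensional ℂ H]
  {fi fj gi gj : H}

theorem mem_spectrum_erasureOp {μ : ℂ} (hμ0 : μ ≠ 0) (hβ : ⟪gi, fj⟫ ≠ 0)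
    (hμ : (μ - ⟪gi, fi⟫) * (μ - ⟪gj, fj⟫) = ⟪gi, fj⟫ * ⟪gj, fi⟫) :
    μ ∈ spectrum ℂ (erasureOp fi fj gi gj) := by
  refine ContinuousLinearMap.mem_spectrum_iff_exists_eigenvector.mpr
    ⟨_, fun hv => ?_, erasureOp_apply_eigenvector hμ⟩
  have : ⟪gi, ⟪gi, fj⟫ • fi + (μ - ⟪gi, fi⟫) • fj⟫ = μ * ⟪gi, fj⟫ := by
    simp only [inner_add_right, inner_smul_right]
    ring
  rw [hv, inner_zero_right] at this
  exact mul_ne_zero hμ0 hβ this.symm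

theorem specRad_erasureOp_le {a d r c : ℝ} (ha : ⟪gi, fi⟫ = a) (hd : ⟪gj, fj⟫ = d)
    (hcross : ⟪gi, fj⟫ * ⟪gj, fi⟫ = c) (ha0 : 0 ≤ a) (har : a ≤ r) (hd0 : 0 ≤ d) (hdr : d ≤ r)
    (hc : c ≤ 0) :
    specRad (erasureOp fi fj gi gj) ≤ √(r ^ 2 - c) := by
  refine specRad_le (Real.sqrt_nonneg _) fun μ hμ => ?_
  obtain ⟨v, hv, hTv⟩ := ContinuousLinearMap.mem_spectrum_iff_exists_eigenvector.mp hμ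
  rcases eq_zero_or_of_erasureOp_apply_eq_smul hv hTv with rfl | hq
  · simp
  · rw [ha, hd, hcross] at hq
    exact Complex.norm_le_sqrt_of_mul_sub_eq ha0 har hd0 hdr hc hq

theorem specRad_erasureOp_eq {r c : ℝ} (hi : ⟪gi, fi⟫ = r) (hj : ⟪gj, fj⟫ = r)
    (hcross : ⟪gi, fj⟫ * ⟪gj, fi⟫ = c) (hr : 0 ≤ r) (hc : c < 0) :
    specRad (erasureOp fi fj gi gj) = √(r ^ 2 - c) := by
  refine le_antisymm (specRad_erasureOp_le hi hj hcross hr le_rfl hr le_rfl hc.le) ?_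
  set μ : ℂ := r + √(-c) * Complex.I
  have hsqrt : 0 < √(-c) := Real.sqrt_pos.mpr (neg_pos.mpr hc)
  have hμ0 : μ ≠ 0 := fun h => hsqrt.ne' (by simpa [μ] using congrArg Complex.im h)
  have hβ : ⟪gi, fj⟫ ≠ 0 := by
    intro h
    rw [h, zero_mul, eq_comm, Complex.ofReal_eq_zero] at hcross
    exact hc.ne hcross
  have hμ : (μ - ⟪gi, fi⟫) * (μ - ⟪gj, fj⟫) = ⟪gi, fj⟫ * ⟪gj, fi⟫ := by
    have : (√(-c) : ℂ) ^ 2 = -c := by exact_mod_cast Real.sq_sqrt (neg_pos.mpr hc).le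
    rw [hi, hj, hcross]
    linear_combination (-1 : ℂ) * this + (√(-c) : ℂ) ^ 2 * Complex.I_sq
  calc √(r ^ 2 - c) = ‖μ‖ := by
        rw [Complex.norm_add_mul_I, Real.sq_sqrt (neg_pos.mpr hc).le, sub_eq_add_neg]
    _ ≤ _ := norm_le_specRad (mem_spectrum_erasureOp hμ0 hβ hμ)

end ErasureSpectrum

theorem stmt18_general
    {H : Type*} [NormedAddCommGroup H] [InnerProductSpace ℂ H] [FiniteDimensional ℂ H]
    {N : ℕ}
    (F G : Fin N → H)
    (hpos : ∀ i, (⟪F i, G i⟫).im = 0 ∧ 0 ≤ (⟪F i, G i⟫).re)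
    (c : ℝ) (hc : c < 0)
    (huni : ∀ i j, i ≠ j → ⟪F j, G i⟫ * ⟪F i, G j⟫ = (c : ℂ))
    (r₁ : ℝ) (hr₁ : r₁ = ⨆ i, (⟪F i, G i⟫).re)
    (r₂ : ℝ) (hr₂ : r₂ = ⨆ p : {p : Fin N × Fin N // p.1 ≠ p.2},
      specRad (erasureOp (F p.1.1) (F p.1.2) (G p.1.1) (G p.1.2)))
    (hΔ : ∃ k l : Fin N, k ≠ l ∧ (⟪F k, G k⟫).re = r₁ ∧ (⟪F l, G l⟫).re = r₁) :
    r₂ = Real.sqrt (r₁ ^ 2 - c) := by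
  obtain ⟨k, l, hkl, hk, hl⟩ := hΔ
  have hdiag : ∀ i, ⟪G i, F i⟫ = (⟪F i, G i⟫).re := fun i => by
    have hreal := Complex.conj_eq_iff_im.mpr (hpos i).1
    rw [← inner_conj_symm (G i) (F i), hreal, Complex.conj_eq_iff_re.mp hreal]
  have hcross : ∀ i j, i ≠ j → ⟪G i, F j⟫ * ⟪G j, F i⟫ = c := fun i j hij => by
    rw [← inner_conj_symm (G i), ← inner_conj_symm (G j), ← map_mul, huni i j hij,
      Complex.conj_ofReal]
  have hle : ∀ i, (⟪F i, G i⟫).re ≤ r₁ := fun i =>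
    hr₁ ▸ le_ciSup (f := fun i => (⟪F i, G i⟫).re) (Set.finite_range _).bddAbove i
  rw [hr₂]
  refine le_antisymm (Real.iSup_le (fun p => ?_) (Real.sqrt_nonneg _)) ?_
  · exact specRad_erasureOp_le (hdiag _) (hdiag _) (hcross _ _ p.2) (hpos _).2 (hle _)
      (hpos _).2 (hle _) hc.le
  · refine le_ciSup_of_le (Set.finite_range _).bddAbove ⟨(k, l), hkl⟩ (le_of_eq ?_)
    exact (specRad_erasureOp_eq (hk ▸ hdiag k) (hl ▸ hdiag l) (hcross k l hkl)
      (hk ▸ (hpos k).2) hc).symm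

/-- Let `N ≥ 2` and `G` a `K`-dual of `F` with each `⟨g_i, f_i⟩` a nonnegative
real and `⟨g_i, f_j⟩⟨g_j, f_i⟩ = c < 0` for all `i ≠ j`.  With `r₁ = max_i ⟨g_i, f_i⟩`,
`Δ` the set of maximizing indices and `r₂ = max_{i≠j} ρ(T_{ij})`:
if `Δ` has more than one element then `r₂ = √(r₁² − c)`. -/
theorem stmt18
    {H : Type*} [NormedAddCommGroup H] [InnerProductSpace ℂ H] [FiniteDimensional ℂ H]
    (hdim : 1 ≤ Module.finrank ℂ H)
    {N : ℕ} (hN : 2 ≤ N)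
    (K : H →L[ℂ] H)
    (F G : Fin N → H)
    (hdual : ∀ f : H, K f = ∑ i, ⟪G i, f⟫ • F i)
    (hpos : ∀ i, (⟪F i, G i⟫).im = 0 ∧ 0 ≤ (⟪F i, G i⟫).re)
    (c : ℝ) (hc : c < 0)
    (huni : ∀ i j, i ≠ j → ⟪F j, G i⟫ * ⟪F i, G j⟫ = (c : ℂ))
    (r₁ : ℝ) (hr₁ : r₁ = ⨆ i, (⟪F i, G i⟫).re)
    (r₂ : ℝ) (hr₂ : r₂ = ⨆ p : {p : Fin N × Fin N // p.1 ≠ p.2},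
      specRad (erasureOp (F p.1.1) (F p.1.2) (G p.1.1) (G p.1.2)))
    (hΔ : ∃ k l : Fin N, k ≠ l ∧ (⟪F k, G k⟫).re = r₁ ∧ (⟪F l, G l⟫).re = r₁) :
    r₂ = Real.sqrt (r₁ ^ 2 - c) :=
  stmt18_general F G hpos c hc huni r₁ hr₁ r₂ hr₂ hΔ
end
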